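/- (Constrained Willmore spectral symmetry) Suppose κ, c, q : M → ℂ satisfy κ_{z̄z̄} + (1/2)c̄κ = Re(q̄κ), the Gauss equation c_{z̄}/2 = 3κ̄_z κ + κ̄κ_z, and q is holomorphic (q_{z̄} = 0). Then for λ ∈ S¹ ⊂ ℂ, the triple κ_λ = λκ, c_λ = c + (λ² - 1)q, q_λ = λ²q also satisfies all three conditions. -/

import Mathlib

open Complex

/-- Wirtinger derivative `∂_z = (∂_x - i ∂_y)/2`. -/
noncomputable def wdz (F : ℂ → ℂ) (z : ℂ) : ℂ :=
  (fderiv ℝ F z 1 - Complex.I * fderiv ℝ F z Complex.I) / 2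

/-- Conjugate Wirtinger derivative `∂_z̄ = (∂_x + i ∂_y)/2`. -/
noncomputable def wdzbar (F : ℂ → ℂ) (z : ℂ) : ℂ :=
  (fderiv ℝ F z 1 + Complex.I * fderiv ℝ F z Complex.I) / 2

lemma wdzbar_congr {F G : ℂ → ℂ} {z : ℂ} (h : F =ᶠ[nhds z] G) :
    wdzbar F z = wdzbar G z := by
  unfold wdzbar; rw [h.fderiv_eq]

lemma wdz_congr {F G : ℂ → ℂ} {z : ℂ} (h : F =ᶠ[nhds z] G) :
    wdz F z = wdz G z := by
  unfold wdz; rw [h.fderiv_eq]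

lemma wdzbar_const_mul (a : ℂ) {F : ℂ → ℂ} {z : ℂ} (hF : DifferentiableAt ℝ F z) :
    wdzbar (fun w => a * F w) z = a * wdzbar F z := by
  have h : fderiv ℝ (fun w => a • F w) z = a • fderiv ℝ F z := fderiv_const_smul hF a
  unfold wdzbar
  simp only [smul_eq_mul] at h
  rw [h]
  simp [smul_eq_mul]
  ring

lemma wdz_const_mul (a : ℂ) {F : ℂ → ℂ} {z : ℂ} (hF : DifferentiableAt ℝ F z) :
    wdz (fun w => a * F w) z = a * wdz F z := by
  have h : fderiv ℝ (fun w => a • F w) z = a • fderiv ℝ F z := fderiv_const_smul hF a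
  unfold wdz
  simp only [smul_eq_mul] at h
  rw [h]
  simp [smul_eq_mul]
  ring

lemma wdzbar_add {F G : ℂ → ℂ} {z : ℂ} (hF : DifferentiableAt ℝ F z)
    (hG : DifferentiableAt ℝ G z) :
    wdzbar (fun w => F w + G w) z = wdzbar F z + wdzbar G z := by
  unfold wdzbar
  rw [fderiv_fun_add hF hG]
  simp
  ring

lemma contDiffOn_wdzbar {F : ℂ → ℂ} {s : Set ℂ} (hs : IsOpen s)
    (hF : ContDiffOn ℝ (⊤ : ℕ∞) F s) : ContDiffOn ℝ (⊤ : ℕ∞) (wdzbar F) s := by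
  have h : ContDiffOn ℝ (⊤ : ℕ∞) (fun x => fderiv ℝ F x) s := hF.fderiv_of_isOpen hs (by simp)
  have h1 : ContDiffOn ℝ (⊤ : ℕ∞) (fun x => fderiv ℝ F x 1) s :=
    (ContinuousLinearMap.apply ℝ ℂ (1 : ℂ)).contDiff.comp_contDiffOn h
  have h2 : ContDiffOn ℝ (⊤ : ℕ∞) (fun x => fderiv ℝ F x Complex.I) s :=
    (ContinuousLinearMap.apply ℝ ℂ (Complex.I : ℂ)).contDiff.comp_contDiffOn h
  unfold wdzbar
  exact ((h1.add (contDiffOn_const.mul h2)).div_const 2)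

/-- `Re w` as a complex number equals `(w + conj w)/2`. -/
lemma re_eq (w : ℂ) : ((w.re : ℝ) : ℂ) = (w + (starRingEnd ℂ) w) / 2 := by
  rw [Complex.add_conj]; push_cast; ring

/-- The constrained Willmore spectral symmetry: for `|λ| = 1`, the triple
`κ_λ = λκ`, `c_λ = c + (λ² - 1)q`, `q_λ = λ²q` again satisfies the constrained
Willmore equation, the Gauss equation, and `q_λ` is holomorphic. -/
theorem constrained_willmore_spectral_symmetry
    (M : Set ℂ) (hM : IsOpen M)
    (κ c q : ℂ → ℂ)
    (hκ : ContDiffOn ℝ (⊤ : ℕ∞) κ M) (hc : ContDiffOn ℝ (⊤ : ℕ∞) c M) (hq : ContDiffOn ℝ (⊤ : ℕ∞) q M)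
    (hconstrained : ∀ z ∈ M,
      wdzbar (fun w => wdzbar κ w) z + (1 / 2) * (starRingEnd ℂ) (c z) * κ z
        = ((((starRingEnd ℂ) (q z) * κ z).re : ℝ) : ℂ))
    (hGauss : ∀ z ∈ M,
      wdzbar c z / 2
        = 3 * wdz (fun w => (starRingEnd ℂ) (κ w)) z * κ z
          + (starRingEnd ℂ) (κ z) * wdz κ z)
    (hqholo : ∀ z ∈ M, wdzbar q z = 0)
    (lam : ℂ) (hlam : ‖lam‖ = 1) :
    (∀ z ∈ M,
      wdzbar (fun w => wdzbar (fun ζ => lam * κ ζ) w) z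
          + (1 / 2) * (starRingEnd ℂ) (c z + (lam ^ 2 - 1) * q z) * (lam * κ z)
        = ((((starRingEnd ℂ) (lam ^ 2 * q z) * (lam * κ z)).re : ℝ) : ℂ)) ∧
    (∀ z ∈ M,
      wdzbar (fun w => c w + (lam ^ 2 - 1) * q w) z / 2
        = 3 * wdz (fun w => (starRingEnd ℂ) (lam * κ w)) z * (lam * κ z)
          + (starRingEnd ℂ) (lam * κ z) * wdz (fun w => lam * κ w) z) ∧
    (∀ z ∈ M, wdzbar (fun w => lam ^ 2 * q w) z = 0) := by
  have hunit : lam * (starRingEnd ℂ) lam = 1 := by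
    rw [Complex.mul_conj]
    norm_cast
    rw [Complex.normSq_eq_norm_sq, hlam]; norm_num
  have hκd : ∀ z ∈ M, DifferentiableAt ℝ κ z := fun z hz =>
    (hκ.contDiffAt (hM.mem_nhds hz)).differentiableAt (by simp)
  have hqd : ∀ z ∈ M, DifferentiableAt ℝ q z := fun z hz =>
    (hq.contDiffAt (hM.mem_nhds hz)).differentiableAt (by simp)
  have hcd : ∀ z ∈ M, DifferentiableAt ℝ c z := fun z hz =>
    (hc.contDiffAt (hM.mem_nhds hz)).differentiableAt (by simp)
  have hκconjd : ∀ z ∈ M, DifferentiableAt ℝ (fun w => (starRingEnd ℂ) (κ w)) z := fun z hz =>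
    (Complex.conjCLE.differentiable.differentiableAt).comp z (hκd z hz)
  have hwκd : ∀ z ∈ M, DifferentiableAt ℝ (wdzbar κ) z := fun z hz =>
    ((contDiffOn_wdzbar hM hκ).contDiffAt (hM.mem_nhds hz)).differentiableAt (by simp)
  refine ⟨?_, ?_, ?_⟩
  · intro z hz
    have hev : (fun w => wdzbar (fun ζ => lam * κ ζ) w) =ᶠ[nhds z]
        (fun w => lam * wdzbar κ w) := by
      filter_upwards [hM.mem_nhds hz] with w hw
      exact wdzbar_const_mul lam (hκd w hw)
    rw [wdzbar_congr hev, wdzbar_const_mul lam (hwκd z hz)]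
    have h1 := hconstrained z hz
    rw [re_eq] at h1 ⊢
    have h2 : wdzbar (fun w => wdzbar κ w) z =
        ((starRingEnd ℂ) (q z) * κ z + (starRingEnd ℂ) ((starRingEnd ℂ) (q z) * κ z)) / 2
        - (1 / 2) * (starRingEnd ℂ) (c z) * κ z := by linear_combination h1
    rw [show wdzbar κ = fun w => wdzbar κ w from rfl, h2]
    simp only [map_add, map_mul, map_sub, map_one, map_pow, RingHomCompTriple.comp_apply,
      RingHom.id_apply]
    linear_combination (- lam * q z * (starRingEnd ℂ) (κ z) / 2) * hunit
  · intro z hz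
    have hG := hGauss z hz
    have hQ := hqholo z hz
    rw [wdzbar_add (hcd z hz) ((hqd z hz).const_mul _), wdzbar_const_mul _ (hqd z hz), hQ]
    have hev1 : (fun w => (starRingEnd ℂ) (lam * κ w)) =ᶠ[nhds z]
        (fun w => (starRingEnd ℂ) lam * (starRingEnd ℂ) (κ w)) := by
      filter_upwards with w; rw [map_mul]
    rw [wdz_congr hev1, wdz_const_mul _ (hκconjd z hz), wdz_const_mul lam (hκd z hz), map_mul]
    linear_combination hG - (3 * wdz (fun w => (starRingEnd ℂ) (κ w)) z * κ z
      + (starRingEnd ℂ) (κ z) * wdz κ z) * hunit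
  · intro z hz
    rw [wdzbar_const_mul _ (hqd z hz), hqholo z hz, mul_zero]
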